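/- arXiv:2005.00139 — 3 statements merged into one kernel-verified Lean document; each statement's English description precedes it below -/
import Mathlib

section
/- Let X be a vertex-transitive graph on n vertices. Then the product of the maximum size of an independent set (coclique) of X and the maximum size of a clique of X is at most n. -/
/-!
Let `Γ = Aut G` act on `V`. An automorphism maps the clique `C` onto a clique, which meets the
coclique `I` in at most one vertex, so `|{c ∈ C | g c ∈ I}| ≤ 1` for every `g ∈ Γ`. Since `Γ` is
transitive, each pair `(c, i) ∈ C × I` satisfies `g c = i` for exactly `|Γ| / |V|` elements
`g ∈ Γ`; summing over `Γ` therefore gives `|C| |I| |Γ| / |V| ≤ |Γ|`.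
-/

open Finset

namespace MulAction

variable {Γ V : Type*} [Group Γ] [MulAction Γ V] [IsPretransitive Γ V] [DecidableEq V]

section Counting

variable [Fintype Γ]

theorem card_filter_smul_eq_eq_card_filter_smul_eq_self (a b : V) :
    #{g : Γ | g • a = b} = #{g : Γ | g • a = a} := by
  obtain ⟨h, rfl⟩ := exists_smul_eq Γ a b
  refine card_equiv (Equiv.mulLeft h⁻¹) fun g => ?_
  simp [mul_smul, inv_smul_eq_iff]

theorem card_mul_card_filter_smul_eq [Fintype V] (a b : V) :
    Fintype.card V * #{g : Γ | g • a = b} = Fintype.card Γ := by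
  have hfib := card_eq_sum_card_fiberwise (f := fun g : Γ => g • a) (s := univ) (t := univ)
    fun _ _ => mem_univ _
  simp only [card_filter_smul_eq_eq_card_filter_smul_eq_self a, sum_const, smul_eq_mul,
    card_univ] at hfib
  rw [card_filter_smul_eq_eq_card_filter_smul_eq_self a, hfib]

theorem card_mul_card_mul_card_eq_card_mul_sum [Fintype V] (A B : Finset V) :
    #A * #B * Fintype.card Γ = Fintype.card V * ∑ g : Γ, #{a ∈ A | g • a ∈ B} := by
  have hswap : ∑ g : Γ, #{a ∈ A | g • a ∈ B} = ∑ a ∈ A, ∑ b ∈ B, #{g : Γ | g • a = b} := by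
    simp only [sum_card_fiberwise_eq_card_filter]
    simp only [card_filter]
    exact sum_comm
  rw [hswap]
  simp only [mul_sum, card_mul_card_filter_smul_eq, sum_const, smul_eq_mul]
  ring

end Counting

theorem card_mul_card_le_of_forall_card_filter_smul_mem_le_one [Finite Γ] [Fintype V]
    {A B : Finset V} (h : ∀ g : Γ, #{a ∈ A | g • a ∈ B} ≤ 1) : #A * #B ≤ Fintype.card V := by
  have := Fintype.ofFinite Γ
  refine Nat.le_of_mul_le_mul_right ?_ (Fintype.card_pos (α := Γ))
  calc #A * #B * Fintype.card Γ = Fintype.card V * ∑ g : Γ, #{a ∈ A | g • a ∈ B} :=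
        card_mul_card_mul_card_eq_card_mul_sum A B
    _ ≤ Fintype.card V * ∑ _g : Γ, 1 := by gcongr with g; exact h g
    _ = Fintype.card V * Fintype.card Γ := by simp

end MulAction

theorem SimpleGraph.card_filter_map_mem_le_one {V W : Type*} [DecidableEq W] {G : SimpleGraph V}
    {H : SimpleGraph W} (f : G →g H) {C : Finset V} {I : Finset W} (hC : G.IsClique (C : Set V))
    (hI : Hᶜ.IsClique (I : Set W)) : #{c ∈ C | f c ∈ I} ≤ 1 := by
  refine card_le_one.mpr fun a ha b hb => by_contra fun hab => ?_
  rw [mem_filter] at ha hb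
  have hadj : H.Adj (f a) (f b) := f.map_adj (hC ha.1 hb.1 hab)
  exact (hI ha.2 hb.2 hadj.ne).2 hadj

/-- Clique-coclique bound: in a vertex-transitive graph `G` on a finite vertex
set `V`, the product of the size of any independent set (coclique) and the size
of any clique is at most `|V|`; in particular `α(G)·ω(G) ≤ |V|`. -/
theorem clique_coclique_bound {V : Type*} [Fintype V] (G : SimpleGraph V)
    (hvt : ∀ u v : V, ∃ e : G ≃g G, e u = v)
    (I C : Finset V)
    (hI : Gᶜ.IsClique (I : Set V))  -- `I` is an independent set of `G`
    (hC : G.IsClique (C : Set V)) :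
    I.card * C.card ≤ Fintype.card V := by
  classical
  have : MulAction.IsPretransitive (G ≃g G) V := ⟨hvt⟩
  have : Finite (G ≃g G) := Finite.of_injective _ (MulAction.toPerm_injective (β := V))
  rw [mul_comm]
  exact MulAction.card_mul_card_le_of_forall_card_filter_smul_mem_le_one fun (g : G ≃g G) =>
    G.card_filter_map_mem_le_one g.toHom hC hI
end

section
/- Let X be a graph on v vertices and A a real symmetric weighted adjacency matrix for X (A[i,j] = 0 whenever i and j are non-adjacent) with constant row and column sum d. If the least eigenvalue of A is τ, then every independent set S of X satisfies |S| ≤ v/(1 − d/τ). -/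
/-!
Let `x` be the characteristic vector of `S`, `s = |S|` and `n = v`. The vector
`z = n x - s 𝟙` satisfies `zᵀ z = n s (n - s)` and, because `xᵀ A x = 0` and `A 𝟙 = d 𝟙`,
`zᵀ A z = -n d s²`. Since `A - τ I` is positive semidefinite, `τ zᵀ z ≤ zᵀ A z`, and for
`s > 0` this rearranges to `s (d - τ) ≤ -τ n`, which is the bound.
-/

open Matrix
open scoped ComplexOrder

namespace Matrix

theorem IsHermitian.posSemidef_sub_smul_one {𝕜 n : Type*} [RCLike 𝕜] [Fintype n]
    [DecidableEq n] {A : Matrix n n 𝕜} (hA : A.IsHermitian) {τ : ℝ}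
    (hτ : ∀ (μ : ℝ) (x : n → 𝕜), x ≠ 0 → A *ᵥ x = μ • x → τ ≤ μ) :
    (A - τ • (1 : Matrix n n 𝕜)).PosSemidef := by
  have hB : (A - τ • (1 : Matrix n n 𝕜)).IsHermitian :=
    hA.sub (isHermitian_one.smul (IsSelfAdjoint.all τ))
  refine hB.posSemidef_iff_eigenvalues_nonneg.mpr fun i => ?_
  set v := hB.eigenvectorBasis i
  have hv : A *ᵥ ⇑v = (hB.eigenvalues i + τ) • ⇑v := by
    have := hB.mulVec_eigenvectorBasis i
    rw [sub_mulVec, smul_mulVec, one_mulVec, sub_eq_iff_eq_add] at this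
    rw [this, add_smul]
  have hv0 : (⇑v : n → 𝕜) ≠ 0 := fun h =>
    hB.eigenvectorBasis.orthonormal.ne_zero i (by ext j; exact congrFun h j)
  simpa using hτ _ _ hv0 hv

theorem IsSymm.mul_dotProduct_self_le {n : Type*} [Fintype n] {A : Matrix n n ℝ}
    (hA : A.IsSymm) {τ : ℝ} (hτ : ∀ (μ : ℝ) (x : n → ℝ), x ≠ 0 → A *ᵥ x = μ • x → τ ≤ μ)
    (z : n → ℝ) : τ * (z ⬝ᵥ z) ≤ z ⬝ᵥ (A *ᵥ z) := by
  classical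
  have := ((isHermitian_iff_isSymm.mpr hA).posSemidef_sub_smul_one hτ).dotProduct_mulVec_nonneg z
  simpa [sub_mulVec, smul_mulVec, dotProduct_smul, sub_nonneg] using this

theorem IsSymm.sub_smul_one_dotProduct_mulVec {n : Type*} [Fintype n] {A : Matrix n n ℝ}
    (hA : A.IsSymm) {d : ℝ} (hrow : ∀ i, ∑ j, A i j = d) (x : n → ℝ) (b : ℝ) :
    (x - b • 1) ⬝ᵥ (A *ᵥ (x - b • 1)) =
      x ⬝ᵥ (A *ᵥ x) - 2 * b * d * ∑ i, x i + b ^ 2 * d * Fintype.card n := by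
  have hA1 : A *ᵥ 1 = d • 1 := by
    ext i; simp [mulVec, dotProduct_one, hrow]
  have h1A : 1 ⬝ᵥ (A *ᵥ x) = x ⬝ᵥ (A *ᵥ 1) := by
    rw [dotProduct_mulVec, ← mulVec_transpose, hA.eq, dotProduct_comm]
  simp only [mulVec_sub, mulVec_smul, sub_dotProduct, dotProduct_sub, smul_dotProduct,
    dotProduct_smul, h1A, hA1]
  rw [one_dotProduct_one, dotProduct_one]
  simp only [smul_eq_mul]
  ring

theorem sub_smul_one_dotProduct_self {n : Type*} [Fintype n] (x : n → ℝ) (b : ℝ) :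
    (x - b • 1) ⬝ᵥ (x - b • 1) = x ⬝ᵥ x - 2 * b * ∑ i, x i + b ^ 2 * Fintype.card n := by
  classical
  simpa using isSymm_one.sub_smul_one_dotProduct_mulVec (A := (1 : Matrix n n ℝ)) (d := 1)
    (fun i => by simp [one_apply]) x b

theorem dotProduct_mulVec_eq_zero_of_support_subset {n : Type*} [Fintype n]
    {A : Matrix n n ℝ} {S : Set n} (hA : ∀ i ∈ S, ∀ j ∈ S, A i j = 0) {x : n → ℝ}
    (hx : ∀ i ∉ S, x i = 0) : x ⬝ᵥ (A *ᵥ x) = 0 := by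
  simp only [dotProduct, mulVec, Finset.mul_sum]
  refine Finset.sum_eq_zero fun i _ => Finset.sum_eq_zero fun j _ => ?_
  by_cases hi : i ∈ S
  · by_cases hj : j ∈ S
    · simp [hA i hi j hj]
    · simp [hx j hj]
  · simp [hx i hi]

end Matrix

theorem le_div_one_sub_div_of_quadratic {n s d τ : ℝ} (hτ : τ < 0) (hd : 0 < d) (hs : 0 ≤ s)
    (hsn : s ≤ n) (h : τ * (n ^ 2 * s - n * s ^ 2) ≤ -(n * d * s ^ 2)) :
    s ≤ n / (1 - d / τ) := by
  have hτ0 : τ ≠ 0 := hτ.ne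
  have hpos : 0 < 1 - d / τ := by linarith [div_neg_of_pos_of_neg hd hτ]
  rw [le_div_iff₀ hpos, ← mul_le_mul_iff_of_pos_right (neg_pos.2 hτ),
    show s * (1 - d / τ) * -τ = s * (d - τ) by field_simp; ring]
  rcases hs.eq_or_lt with rfl | hs
  · nlinarith
  · have hns : 0 < n * s := by nlinarith
    nlinarith

theorem weighted_ratio_bound_general {V : Type*} [Fintype V]
    (G : SimpleGraph V) (A : Matrix V V ℝ) (d τ : ℝ)
    (hsym : A.IsSymm)
    (hA0 : ∀ i j : V, ¬ G.Adj i j → A i j = 0)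
    (hrow : ∀ i : V, ∑ j : V, A i j = d)
    (hτmin : ∀ (μ : ℝ) (x : V → ℝ), x ≠ 0 → A.mulVec x = μ • x → τ ≤ μ)
    (hτneg : τ < 0) (hd : 0 < d)
    (S : Finset V) (hS : ∀ i ∈ S, ∀ j ∈ S, ¬ G.Adj i j) :
    (S.card : ℝ) ≤ (Fintype.card V : ℝ) / (1 - d / τ) := by
  classical
  set n : ℝ := (Fintype.card V : ℝ)
  set s : ℝ := (S.card : ℝ)
  set x : V → ℝ := (S : Set V).indicator 1
  have hxAx : x ⬝ᵥ (A *ᵥ x) = 0 :=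
    dotProduct_mulVec_eq_zero_of_support_subset (fun i hi j hj => hA0 i j (hS i hi j hj))
      fun i hi => Set.indicator_of_notMem hi 1
  have hx1 : ∑ i, x i = s := by simp [x, s, Set.indicator_apply]
  have hxx : x ⬝ᵥ x = s := by simp [x, s, dotProduct, Set.indicator_apply]
  have key := hsym.mul_dotProduct_self_le hτmin (n • x - s • 1)
  rw [sub_smul_one_dotProduct_self, hsym.sub_smul_one_dotProduct_mulVec hrow] at key
  simp only [smul_dotProduct, dotProduct_smul, mulVec_smul, hxAx, hxx, smul_eq_mul,
    Pi.smul_apply, ← Finset.mul_sum, hx1] at key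
  exact le_div_one_sub_div_of_quadratic hτneg hd (by positivity)
    (Nat.cast_le.2 S.card_le_univ) (by linarith)

/-- Weighted ratio bound: let `A` be a real symmetric weighted adjacency matrix
for a graph `G` on `v` vertices (`A i j = 0` whenever `i` and `j` are
non-adjacent), with all row sums equal to `d`, and least eigenvalue `τ`, with
`τ < 0 < d`.  Then any independent set `S` satisfies `|S| ≤ v / (1 - d/τ)`. -/
theorem weighted_ratio_bound {V : Type*} [Fintype V] [DecidableEq V]
    (G : SimpleGraph V) (A : Matrix V V ℝ) (d τ : ℝ)
    (hsym : A.IsSymm)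
    (hA0 : ∀ i j : V, ¬ G.Adj i j → A i j = 0)
    (hrow : ∀ i : V, ∑ j : V, A i j = d)
    (hτeig : ∃ x : V → ℝ, x ≠ 0 ∧ A.mulVec x = τ • x)
    (hτmin : ∀ (μ : ℝ) (x : V → ℝ), x ≠ 0 → A.mulVec x = μ • x → τ ≤ μ)
    (hτneg : τ < 0) (hd : 0 < d)
    (S : Finset V) (hS : ∀ i ∈ S, ∀ j ∈ S, ¬ G.Adj i j) :
    (S.card : ℝ) ≤ (Fintype.card V : ℝ) / (1 - d / τ) :=
  weighted_ratio_bound_general G A d τ hsym hA0 hrow hτmin hτneg hd S hS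
end

section
/- For every n ≥ 1, if F ⊆ Sym(n) is a family of permutations such that any two members agree on at least one point (i.e., for all σ,τ ∈ F there exists i with σ(i) = τ(i)), then |F| ≤ (n−1)!. -/
/-!
The map `(σ, a) ↦ σ ∘ (· + a)` from `F × ℤ/n` to `Sym(n)` is injective: if
`σ ∘ (· + a) = τ ∘ (· + b)` and `σ x = τ x`, evaluating at `x - b` gives `σ (x - b + a) = σ x`,
so `a = b` and then `σ = τ`. Hence `|F| · n ≤ n!`. The argument only uses that distinct
translations disagree at every point.
-/

open Equiv Finset
open scoped Nat

namespace Equiv.Perm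

variable {α ι : Type*} [Fintype α] [DecidableEq α] [Fintype ι]

theorem card_mul_card_le_factorial_of_intersecting {F : Finset (Perm α)}
    (hF : ∀ σ ∈ F, ∀ τ ∈ F, ∃ x, σ x = τ x) {c : ι → Perm α}
    (hc : ∀ i j x, c i x = c j x → i = j) :
    #F * Fintype.card ι ≤ (Fintype.card α)! := by
  rw [← card_univ, ← card_product, ← Fintype.card_perm, ← card_univ]
  refine card_le_card_of_injOn (fun p => p.1 * c p.2) (fun _ _ => mem_coe.2 (mem_univ _)) ?_
  rintro ⟨σ, i⟩ hσi ⟨τ, j⟩ hτj (h : σ * c i = τ * c j)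
  simp only [coe_product, Set.mem_prod, mem_coe] at hσi hτj
  obtain ⟨x, hx⟩ := hF σ hσi.1 τ hτj.1
  have hij : i = j := by
    refine hc i j ((c j)⁻¹ x) (σ.injective ?_)
    calc σ (c i ((c j)⁻¹ x)) = τ x := by simpa using congr($h ((c j)⁻¹ x))
      _ = σ (c j ((c j)⁻¹ x)) := by simp [hx]
  subst hij
  rw [mul_right_cancel h]

end Equiv.Perm

theorem EKR_permutations_general (n : ℕ)
    (F : Finset (Equiv.Perm (Fin n)))
    (hF : ∀ σ ∈ F, ∀ τ ∈ F, ∃ i : Fin n, σ i = τ i) :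
    F.card ≤ (n - 1).factorial := by
  cases n with
  | zero => simpa using F.card_le_univ
  | succ m =>
    have h := Perm.card_mul_card_le_factorial_of_intersecting hF (c := Equiv.addRight)
      fun _ _ _ => add_left_cancel
    rw [Fintype.card_fin, Nat.factorial_succ, mul_comm] at h
    simpa using Nat.le_of_mul_le_mul_left h m.succ_pos

/-- Deza–Frankl: for `n ≥ 1`, an intersecting family of permutations of
`{1,…,n}` (any two members agree on at least one point) has size at most
`(n-1)!`. -/
theorem EKR_permutations (n : ℕ) (hn : 1 ≤ n)
    (F : Finset (Equiv.Perm (Fin n)))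
    (hF : ∀ σ ∈ F, ∀ τ ∈ F, ∃ i : Fin n, σ i = τ i) :
    F.card ≤ (n - 1).factorial :=
  EKR_permutations_general n F hF
end
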